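/- arXiv:1607.01251 — 4 statements merged into one kernel-verified Lean document; each statement's English description precedes it below -/
import Mathlib

section
/- Let f and f* be probability density functions with respect to a σ-finite measure μ, and let X be a random variable with density f*. For any u ∈ (0,1), E*[log(1 + u(f*(X)/f(X) − 1))] ≥ 0, with equality if and only if f(x) = f*(x) almost surely with respect to the f* distribution. -/
/-!
Write `g = (1 - u) + u f*/f`. Where `f* > 0`, the weighted harmonic–arithmetic mean
inequality gives `f* / g ≤ (1 - u) f* + u f`, so `E*[1/g] ≤ 1`. Together with
`log g ≥ 1 - 1/g` this yields `E*[log g] ≥ 1 - E*[1/g] ≥ 0`. If `E*[log g] = 0`, the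
nonnegative gap `log g - (1 - 1/g)` integrates to zero, which forces `g = 1`, i.e. `f = f*`,
almost surely.
-/

open MeasureTheory Filter

namespace Real

lemma log_eq_one_sub_inv_iff {x : ℝ} (hx : 0 < x) : log x = 1 - x⁻¹ ↔ x = 1 := by
  refine ⟨fun h => ?_, fun h => by simp [h]⟩
  by_contra hne
  have := log_lt_sub_one_of_pos (inv_pos.2 hx) (inv_ne_one.2 hne)
  rw [log_inv] at this
  linarith

end Real

section Mixture

variable {u a b : ℝ}

lemma one_sub_le_one_add_mul_div_sub_one (hu : 0 ≤ u) (ha : 0 ≤ a) (hb : 0 ≤ b) :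
    1 - u ≤ 1 + u * (b / a - 1) := by
  nlinarith [mul_nonneg hu (div_nonneg hb ha)]

lemma one_add_mul_div_sub_one_eq_one_iff (hu : u ≠ 0) (ha : a ≠ 0) :
    1 + u * (b / a - 1) = 1 ↔ a = b := by
  rw [add_eq_left, mul_eq_zero, sub_eq_zero, div_eq_one_iff_eq ha, or_iff_right hu, eq_comm]

lemma mul_inv_one_add_mul_div_sub_one_le (hu0 : 0 ≤ u) (hu1 : u < 1) (ha : 0 ≤ a) (hb : 0 ≤ b)
    (hab : 0 < b → 0 < a) : b * (1 + u * (b / a - 1))⁻¹ ≤ (1 - u) * b + u * a := by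
  rcases hb.eq_or_lt with rfl | hb
  · simpa using mul_nonneg hu0 ha
  have ha := hab hb
  have hden : 0 < (1 - u) * a + u * b := by nlinarith
  rw [show 1 + u * (b / a - 1) = ((1 - u) * a + u * b) / a by field_simp; ring, inv_div,
    ← mul_div_assoc, div_le_iff₀ hden]
  -- the difference of the two sides is `u (1 - u) (a - b)²`
  nlinarith [mul_nonneg (mul_nonneg hu0 (sub_nonneg.2 hu1.le)) (sq_nonneg (a - b))]

end Mixture

section LogInverse

open Real

variable {Ω : Type*} [MeasurableSpace Ω] {ν : Measure Ω} {g : Ω → ℝ}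

lemma log_sub_one_sub_inv_ae_nonneg (hg : ∀ᵐ x ∂ν, 0 < g x) :
    0 ≤ᵐ[ν] fun x => log (g x) - (1 - (g x)⁻¹) := by
  filter_upwards [hg] with x hx
  exact sub_nonneg.2 (one_sub_inv_le_log_of_pos hx)

lemma integrable_inv_of_le [IsFiniteMeasure ν] {c : ℝ} (hg : AEMeasurable g ν) (hc : 0 < c)
    (hcg : ∀ᵐ x ∂ν, c ≤ g x) : Integrable (fun x => (g x)⁻¹) ν := by
  refine Integrable.of_bound (C := c⁻¹) hg.inv.aestronglyMeasurable ?_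
  filter_upwards [hcg] with x hx
  rw [norm_of_nonneg (inv_nonneg.2 (hc.le.trans hx))]
  exact inv_anti₀ hc hx

lemma integral_log_sub_one_sub_inv_le [IsProbabilityMeasure ν]
    (hlog : Integrable (fun x => log (g x)) ν) (hinv : Integrable (fun x => (g x)⁻¹) ν)
    (h1 : ∫ x, (g x)⁻¹ ∂ν ≤ 1) :
    ∫ x, (log (g x) - (1 - (g x)⁻¹)) ∂ν ≤ ∫ x, log (g x) ∂ν := by
  have hsub : Integrable (fun x => 1 - (g x)⁻¹) ν := (integrable_const 1).sub hinv
  rw [integral_sub hlog hsub, integral_sub (integrable_const 1) hinv, integral_const,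
    probReal_univ, one_smul]
  linarith

lemma integral_log_nonneg_of_integral_inv_le_one [IsProbabilityMeasure ν]
    (hg : ∀ᵐ x ∂ν, 0 < g x) (hlog : Integrable (fun x => log (g x)) ν)
    (hinv : Integrable (fun x => (g x)⁻¹) ν) (h1 : ∫ x, (g x)⁻¹ ∂ν ≤ 1) :
    0 ≤ ∫ x, log (g x) ∂ν :=
  (integral_nonneg_of_ae (log_sub_one_sub_inv_ae_nonneg hg)).trans
    (integral_log_sub_one_sub_inv_le hlog hinv h1)

lemma ae_eq_one_of_integral_log_eq_zero [IsProbabilityMeasure ν]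
    (hg : ∀ᵐ x ∂ν, 0 < g x) (hlog : Integrable (fun x => log (g x)) ν)
    (hinv : Integrable (fun x => (g x)⁻¹) ν) (h1 : ∫ x, (g x)⁻¹ ∂ν ≤ 1)
    (h0 : ∫ x, log (g x) ∂ν = 0) : ∀ᵐ x ∂ν, g x = 1 := by
  have hgap : ∫ x, (log (g x) - (1 - (g x)⁻¹)) ∂ν = 0 :=
    le_antisymm (h0 ▸ integral_log_sub_one_sub_inv_le hlog hinv h1)
      (integral_nonneg_of_ae (log_sub_one_sub_inv_ae_nonneg hg))
  have hgap_ae := (integral_eq_zero_iff_of_nonneg_ae (log_sub_one_sub_inv_ae_nonneg hg)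
    (hlog.sub ((integrable_const 1).sub hinv))).1 hgap
  filter_upwards [hgap_ae, hg] with x hx hgx
  exact (log_eq_one_sub_inv_iff hgx).1 (sub_eq_zero.1 hx)

end LogInverse

section Density

variable {α : Type*} [MeasurableSpace α] {μ : Measure α} {p : α → ℝ}

lemma isProbabilityMeasure_withDensity_ofReal (hp0 : 0 ≤ᵐ[μ] p) (hp1 : ∫ x, p x ∂μ = 1) :
    IsProbabilityMeasure (μ.withDensity fun x => ENNReal.ofReal (p x)) := by
  constructor
  rw [withDensity_apply _ MeasurableSet.univ, setLIntegral_univ,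
    ← ofReal_integral_eq_lintegral_ofReal (integrable_of_integral_eq_one hp1) hp0, hp1,
    ENNReal.ofReal_one]

lemma integral_withDensity_ofReal (hp : AEMeasurable p μ) (hp0 : 0 ≤ᵐ[μ] p) (h : α → ℝ) :
    ∫ x, h x ∂(μ.withDensity fun x => ENNReal.ofReal (p x)) = ∫ x, p x * h x ∂μ := by
  rw [integral_withDensity_eq_integral_toReal_smul₀ hp.ennreal_ofReal
    (ae_of_all _ fun _ => ENNReal.ofReal_lt_top)]
  refine integral_congr_ae ?_
  filter_upwards [hp0] with x hx
  rw [ENNReal.toReal_ofReal hx, smul_eq_mul]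

lemma integral_inv_one_add_mul_div_sub_one_le_one {f : α → ℝ} {u : ℝ}
    (hf : Integrable f μ) (hf0 : 0 ≤ᵐ[μ] f) (hf1 : ∫ x, f x ∂μ ≤ 1)
    (hp0 : 0 ≤ᵐ[μ] p) (hp1 : ∫ x, p x ∂μ = 1)
    (hpos : ∀ᵐ x ∂(μ.withDensity fun x => ENNReal.ofReal (p x)), 0 < f x)
    (hu0 : 0 ≤ u) (hu1 : u < 1) :
    ∫ x, (1 + u * (p x / f x - 1))⁻¹ ∂(μ.withDensity fun x => ENNReal.ofReal (p x))
      ≤ 1 := by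
  have hp := integrable_of_integral_eq_one hp1
  have hpos' : ∀ᵐ x ∂μ, 0 < p x → 0 < f x := by
    rw [ae_withDensity_iff' hp.aemeasurable.ennreal_ofReal] at hpos
    filter_upwards [hpos] with x hx hpx
    exact hx (ENNReal.ofReal_pos.2 hpx).ne'
  rw [integral_withDensity_ofReal hp.aemeasurable hp0]
  calc ∫ x, p x * (1 + u * (p x / f x - 1))⁻¹ ∂μ
        ≤ ∫ x, ((1 - u) * p x + u * f x) ∂μ := by
        refine integral_mono_of_nonneg ?_ ((hp.const_mul _).add (hf.const_mul _)) ?_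
        · filter_upwards [hf0, hp0] with x hfx hpx
          have := one_sub_le_one_add_mul_div_sub_one hu0 hfx hpx
          exact mul_nonneg hpx (inv_nonneg.2 (by linarith))
        · filter_upwards [hf0, hp0, hpos'] with x hfx hpx hfpx
          exact mul_inv_one_add_mul_div_sub_one_le hu0 hu1 hfx hpx hfpx
    _ = (1 - u) * ∫ x, p x ∂μ + u * ∫ x, f x ∂μ := by
        rw [integral_add (hp.const_mul _) (hf.const_mul _), integral_const_mul, integral_const_mul]
    _ ≤ 1 := by rw [hp1]; nlinarith

end Density

theorem pfanzagl_inequality_general {α : Type*} [MeasurableSpace α]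
    (μ : Measure α)
    (f fstar : α → ℝ)
    (hf0 : ∀ x, 0 ≤ f x) (hfs0 : ∀ x, 0 ≤ fstar x)
    (hfd : ∫ x, f x ∂μ = 1) (hfsd : ∫ x, fstar x ∂μ = 1)
    (ν : Measure α)
    (hν : ν = μ.withDensity (fun x => ENNReal.ofReal (fstar x)))
    (hpos : ∀ᵐ x ∂ν, 0 < f x)
    (u : ℝ) (hu : u ∈ Set.Ioo (0 : ℝ) 1)
    (hint : Integrable (fun x => Real.log (1 + u * (fstar x / f x - 1))) ν) :
    0 ≤ ∫ x, Real.log (1 + u * (fstar x / f x - 1)) ∂ν ∧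
    ((∫ x, Real.log (1 + u * (fstar x / f x - 1)) ∂ν = 0) ↔
      (∀ᵐ x ∂ν, f x = fstar x)) := by
  obtain ⟨hu0, hu1⟩ := hu
  have hf := integrable_of_integral_eq_one hfd
  have hfs := integrable_of_integral_eq_one hfsd
  have hg : ∀ x, 1 - u ≤ 1 + u * (fstar x / f x - 1) := fun x =>
    one_sub_le_one_add_mul_div_sub_one hu0.le (hf0 x) (hfs0 x)
  have hg_pos : ∀ᵐ x ∂ν, 0 < 1 + u * (fstar x / f x - 1) :=
    ae_of_all _ fun x => (sub_pos.2 hu1).trans_le (hg x)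
  have hinv1 : ∫ x, (1 + u * (fstar x / f x - 1))⁻¹ ∂ν ≤ 1 := by
    rw [hν] at hpos ⊢
    exact integral_inv_one_add_mul_div_sub_one_le_one hf (ae_of_all _ hf0) hfd.le
      (ae_of_all _ hfs0) hfsd hpos hu0.le hu1
  have : IsProbabilityMeasure ν :=
    hν ▸ isProbabilityMeasure_withDensity_ofReal (ae_of_all μ hfs0) hfsd
  have hac : ν ≪ μ := hν ▸ withDensity_absolutelyContinuous μ _
  have hfν := hf.aemeasurable.mono_ac hac
  have hfsν := hfs.aemeasurable.mono_ac hac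
  have hinv : Integrable (fun x => (1 + u * (fstar x / f x - 1))⁻¹) ν :=
    integrable_inv_of_le (by fun_prop) (sub_pos.2 hu1) (ae_of_all _ hg)
  refine ⟨integral_log_nonneg_of_integral_inv_le_one hg_pos hint hinv hinv1, fun h0 => ?_,
    fun heq => integral_eq_zero_of_ae ?_⟩
  · filter_upwards [ae_eq_one_of_integral_log_eq_zero hg_pos hint hinv hinv1 h0, hpos]
      with x hx hfx
    exact (one_add_mul_div_sub_one_eq_one_iff hu0.ne' hfx.ne').1 hx
  · filter_upwards [heq, hpos] with x hx hfx
    rw [(one_add_mul_div_sub_one_eq_one_iff hu0.ne' hfx.ne').2 hx, Real.log_one, Pi.zero_apply]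

/-- Pfanzagl's inequality: for densities `f` and `fstar` w.r.t. a σ-finite
measure `μ`, with `ν` the distribution with density `fstar`, and `u ∈ (0,1)`,
`E*[log(1 + u(f*(X)/f(X) − 1))] ≥ 0`, with equality iff `f = fstar`
`ν`-almost surely. -/
theorem pfanzagl_inequality {α : Type*} [MeasurableSpace α]
    (μ : Measure α) [SigmaFinite μ]
    (f fstar : α → ℝ) (hfm : Measurable f) (hfsm : Measurable fstar)
    (hf0 : ∀ x, 0 ≤ f x) (hfs0 : ∀ x, 0 ≤ fstar x)
    (hfd : ∫ x, f x ∂μ = 1) (hfsd : ∫ x, fstar x ∂μ = 1)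
    (ν : Measure α)
    (hν : ν = μ.withDensity (fun x => ENNReal.ofReal (fstar x)))
    (hpos : ∀ᵐ x ∂ν, 0 < f x)
    (u : ℝ) (hu : u ∈ Set.Ioo (0 : ℝ) 1)
    (hint : Integrable (fun x => Real.log (1 + u * (fstar x / f x - 1))) ν) :
    0 ≤ ∫ x, Real.log (1 + u * (fstar x / f x - 1)) ∂ν ∧
    ((∫ x, Real.log (1 + u * (fstar x / f x - 1)) ∂ν = 0) ↔
      (∀ᵐ x ∂ν, f x = fstar x)) :=
  pfanzagl_inequality_general μ f fstar hf0 hfs0 hfd hfsd ν hν hpos u hu hint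
end

section
/- Let G* be the mixing distribution with G*({log n}) = c{n(log n)(log log n)²}^{−1} for n = 20, 21, … (c a normalizing constant), and let f(x; G*) be the corresponding Poisson mixture. Then f(x; G*) ≤ 1/x for all x ≥ 1, and consequently E*[log f(X; G*)] = −∞. -/
/-!
Write `θₙ = log n` and `L(n) = log log n`. For `x = k + 1` the `n`-th term of `f(x; G*)` is
`c θₙᵏ / (n² L(n)² x!)`, and for `n ≥ 20` one has
`1/n² ≤ (21/20) ∫_{log n}^{log (n+1)} e^{-u} du`, so the sum over `n` is dominated by
`(21/20) c / (L(20)² x!) ∫₀^∞ uᵏ e^{-u} du = (21/20) c / (L(20)² x)`. The normalisation gives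
`c ≤ L(20)` (integral test for `∑ 1/(n log n L(n)²)`), and `L(20) > 21/20`, whence `f(x) ≤ 1/x`.

Consequently `-f(x) log f(x) ≥ f(x) log x`, and by Tonelli
`∑ₓ f(x) log x = ∑ₙ wₙ E_{θₙ}[log X]`. A Poisson variable of mean `θ ≥ 16` has
`E[log X] ≥ (log θ)/4`, because it rarely falls below `√θ`; so the series dominates
`(c/4) ∑ 1/(n log n L(n)) = ∞`.
-/

open Real Filter Finset Set MeasureTheory
open scoped Nat Topology

namespace PoissonMixture

lemma exp_one_lt_twenty : exp 1 < 20 := by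
  linarith [exp_one_lt_d9]

lemma log_log_twenty_gt : (21 / 20 : ℝ) < log (log 20) := by
  have he : exp 1 < 2.7182818286 := exp_one_lt_d9
  have h₁ : exp (21 / 20) < 29 / 10 := by
    have h : exp (1 / 20) < 1 / (1 - 1 / 20) :=
      exp_bound_div_one_sub_of_interval' (by norm_num) (by norm_num)
    calc exp (21 / 20) = exp 1 * exp (1 / 20) := by rw [← exp_add]; norm_num
      _ < 2.7182818286 * (1 / (1 - 1 / 20)) := mul_lt_mul'' he h (exp_pos _).le (exp_pos _).le
      _ < 29 / 10 := by norm_num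
  have h₂ : exp (29 / 10) < 20 := by
    have h : 1 / 10 + 1 ≤ exp (1 / 10) := add_one_le_exp _
    calc exp (29 / 10) = exp 1 ^ 3 / exp (1 / 10) := by
          rw [← exp_nat_mul, ← exp_sub]; norm_num
      _ < 2.7182818286 ^ 3 / (1 / 10 + 1) := by gcongr
      _ < 20 := by norm_num
  have hlog : 0 < log 20 := log_pos (by norm_num)
  rw [lt_log_iff_exp_lt hlog, lt_log_iff_exp_lt (by norm_num)]
  exact (exp_lt_exp.2 h₁).trans h₂

lemma one_lt_log_of_exp_one_lt {t : ℝ} (ht : exp 1 < t) : 1 < log t :=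
  (lt_log_iff_exp_lt ((exp_pos 1).trans ht)).2 ht

lemma mul_log_mul_log_log_pow_pos {t : ℝ} (ht : exp 1 < t) (k : ℕ) :
    0 < t * log t * log (log t) ^ k := by
  have h := one_lt_log_of_exp_one_lt ht
  have : 0 < log (log t) := log_pos h
  have : 0 < t := (exp_pos 1).trans ht
  positivity

lemma antitoneOn_inv_mul_log_mul_log_log_pow (k : ℕ) :
    AntitoneOn (fun t => (t * log t * log (log t) ^ k)⁻¹) (Ioi (exp 1)) := by
  intro s hs t ht hst
  have hs₀ : 0 < s := (exp_pos 1).trans hs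
  have hs₁ := one_lt_log_of_exp_one_lt hs
  have hst' : log s ≤ log t := log_le_log hs₀ hst
  have : 0 < log (log s) := log_pos hs₁
  have : log (log s) ≤ log (log t) := log_le_log (by linarith) hst'
  have : 0 < t := by linarith
  have : 0 < log t := by linarith
  exact inv_anti₀ (mul_log_mul_log_log_pow_pos hs k) (by gcongr)

lemma hasDerivAt_neg_inv_log_log {t : ℝ} (ht : exp 1 < t) :
    HasDerivAt (fun s => -(log (log s))⁻¹) (t * log t * log (log t) ^ 2)⁻¹ t := by
  have ht₀ : t ≠ 0 := ((exp_pos 1).trans ht).ne'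
  have ht₁ := one_lt_log_of_exp_one_lt ht
  have hll : log (log t) ≠ 0 := (log_pos ht₁).ne'
  refine (((hasDerivAt_log ht₀).log (by linarith)).fun_inv hll).fun_neg.congr_deriv ?_
  field_simp

lemma hasDerivAt_log_log_log {t : ℝ} (ht : exp 1 < t) :
    HasDerivAt (fun s => log (log (log s))) (t * log t * log (log t))⁻¹ t := by
  have ht₀ : t ≠ 0 := ((exp_pos 1).trans ht).ne'
  have ht₁ := one_lt_log_of_exp_one_lt ht
  have hll : log (log t) ≠ 0 := (log_pos ht₁).ne'
  refine (((hasDerivAt_log ht₀).log (by linarith)).log hll).congr_deriv ?_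
  field_simp

lemma sub_le_sum_of_hasDerivAt_of_antitoneOn {f F : ℝ → ℝ} {a : ℝ}
    (hF : ∀ t ∈ Ici a, HasDerivAt F (f t) t) (hf : AntitoneOn f (Ici a)) (N : ℕ) :
    F (a + N) - F a ≤ ∑ i ∈ range N, f (a + i) := by
  have hIcc : Icc a (a + N) ⊆ Ici a := Icc_subset_Ici_self
  have huIcc : uIcc a (a + N) = Icc a (a + N) := uIcc_of_le (by simp)
  rw [← intervalIntegral.integral_eq_sub_of_hasDerivAt
    (fun t ht => hF t (hIcc (huIcc ▸ ht))) (huIcc ▸ hf.mono hIcc).intervalIntegrable]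
  exact (hf.mono hIcc).integral_le_sum

lemma inv_log_log_sub_le_sum {a : ℝ} (ha : exp 1 < a) (N : ℕ) :
    (log (log a))⁻¹ - (log (log (a + N)))⁻¹ ≤
      ∑ i ∈ range N, ((a + i) * log (a + i) * log (log (a + i)) ^ 2)⁻¹ := by
  have h := sub_le_sum_of_hasDerivAt_of_antitoneOn
    (fun t ht => hasDerivAt_neg_inv_log_log (ha.trans_le ht))
    ((antitoneOn_inv_mul_log_mul_log_log_pow 2).mono (Ici_subset_Ioi.2 ha)) N
  linarith

lemma not_summable_inv_mul_log_mul_log_log {a : ℝ} (ha : exp 1 < a) :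
    ¬ Summable fun i : ℕ => ((a + i) * log (a + i) * log (log (a + i)))⁻¹ := by
  intro hs
  have hanti : AntitoneOn (fun t => (t * log t * log (log t))⁻¹) (Ici a) := by
    simpa only [pow_one] using
      (antitoneOn_inv_mul_log_mul_log_log_pow 1).mono (Ici_subset_Ioi.2 ha)
  have hF : Tendsto (fun N : ℕ => log (log (log (a + N)))) atTop atTop :=
    tendsto_log_atTop.comp <| tendsto_log_atTop.comp <| tendsto_log_atTop.comp <|
      tendsto_atTop_add_const_left _ a tendsto_natCast_atTop_atTop
  obtain ⟨N, hN⟩ := (hF.eventually_gt_atTop (log (log (log a)) + ∑' i : ℕ,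
    ((a + i) * log (a + i) * log (log (a + i)))⁻¹)).exists
  have hle := sub_le_sum_of_hasDerivAt_of_antitoneOn
    (fun t ht => hasDerivAt_log_log_log (ha.trans_le ht)) hanti N
  have hpos : ∀ i : ℕ, 0 ≤ ((a + i) * log (a + i) * log (log (a + i)))⁻¹ := fun i => by
    simpa only [pow_one] using
      (inv_pos.2 (mul_log_mul_log_log_pow_pos (ha.trans_le (by simp : a ≤ a + i)) 1)).le
  linarith [hs.sum_le_tsum (range N) (fun i _ => hpos i)]

lemma integral_pow_mul_exp_neg_le_factorial (k : ℕ) {a b : ℝ} (ha : 0 ≤ a) (hab : a ≤ b) :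
    ∫ u in a..b, u ^ k * exp (-u) ≤ k ! := by
  have hk : (0 : ℝ) < k + 1 := by positivity
  rw [← Gamma_nat_eq_factorial, Gamma_eq_integral hk, intervalIntegral.integral_of_le hab]
  have hcongr : ∫ u in Ioc a b, u ^ k * exp (-u) =
      ∫ u in Ioc a b, exp (-u) * u ^ ((k + 1 : ℝ) - 1) :=
    setIntegral_congr_fun measurableSet_Ioc fun u _ => by
      rw [add_sub_cancel_right, rpow_natCast, mul_comm]
  rw [hcongr]
  refine setIntegral_mono_set (GammaIntegral_convergent hk) ?_
    (Ioc_subset_Ioi_self.trans (Ioi_subset_Ioi ha)).eventuallyLE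
  filter_upwards [ae_restrict_mem measurableSet_Ioi] with u (hu : 0 < u)
  positivity

lemma log_pow_div_sq_le_integral (k : ℕ) {t : ℝ} (ht : 20 ≤ t) :
    log t ^ k / t ^ 2 ≤ 21 / 20 * ∫ u in log t..log (t + 1), u ^ k * exp (-u) := by
  have ht₀ : 0 < t := by linarith
  have hlog : 0 ≤ log t := log_nonneg (by linarith)
  have hmono : log t ≤ log (t + 1) := log_le_log ht₀ (by linarith)
  have hconst : ∫ u in log t..log (t + 1), log t ^ k * exp (-u) = log t ^ k / (t * (t + 1)) := by
    rw [intervalIntegral.integral_const_mul, intervalIntegral.integral_comp_neg (fun u => exp u),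
      integral_exp, exp_neg, exp_neg, exp_log ht₀, exp_log (by linarith)]
    field_simp
    ring
  have hle : log t ^ k / (t * (t + 1)) ≤ ∫ u in log t..log (t + 1), u ^ k * exp (-u) := by
    rw [← hconst]
    refine intervalIntegral.integral_mono_on hmono
      (Continuous.intervalIntegrable (by fun_prop) _ _)
      (Continuous.intervalIntegrable (by fun_prop) _ _) fun u hu => ?_
    gcongr
    exact hu.1
  calc log t ^ k / t ^ 2 ≤ 21 / 20 * (log t ^ k / (t * (t + 1))) := by
        rw [div_le_iff₀ (by positivity)]
        field_simp
        nlinarith [pow_nonneg hlog k]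
    _ ≤ _ := by gcongr

lemma sum_log_pow_div_sq_le (k N : ℕ) :
    ∑ i ∈ range N, log (20 + i) ^ k / (20 + i) ^ 2 ≤ (21 / 20 * k ! : ℝ) := by
  have hint : ∀ i < N, IntervalIntegrable (fun u => u ^ k * exp (-u)) volume
      (log (20 + i)) (log (20 + (i + 1 : ℕ))) := fun _ _ =>
    Continuous.intervalIntegrable (by fun_prop) _ _
  calc ∑ i ∈ range N, log (20 + i) ^ k / (20 + i) ^ 2
      ≤ ∑ i ∈ range N,
          (21 / 20 : ℝ) * ∫ u in log (20 + i)..log (20 + (i + 1 : ℕ)), u ^ k * exp (-u) :=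
        sum_le_sum fun i _ => by
          rw [Nat.cast_succ, ← add_assoc]
          exact log_pow_div_sq_le_integral k (by simp)
    _ = 21 / 20 * ∫ u in log (20 + (0 : ℕ))..log (20 + N), u ^ k * exp (-u) := by
        rw [← mul_sum, intervalIntegral.sum_integral_adjacent_intervals hint]
    _ ≤ 21 / 20 * k ! := by
        gcongr
        exact integral_pow_mul_exp_neg_le_factorial k (log_nonneg (by norm_num))
          (log_le_log (by norm_num) (by simp))

noncomputable def mixingWeight (c : ℝ) (n : ℕ) : ℝ :=
  if 20 ≤ n then c / (n * log n * log (log n) ^ 2) else 0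

noncomputable def poissonWeight (θ : ℝ) (x : ℕ) : ℝ :=
  θ ^ x * exp (-θ) / x !

lemma exp_one_lt_natCast_of_twenty_le {n : ℕ} (hn : 20 ≤ n) : exp 1 < n :=
  exp_one_lt_twenty.trans_le (by exact_mod_cast hn)

lemma mixingWeight_nonneg {c : ℝ} (hc : 0 ≤ c) (n : ℕ) : 0 ≤ mixingWeight c n := by
  unfold mixingWeight
  split_ifs with hn
  · exact div_nonneg hc (mul_log_mul_log_log_pow_pos (exp_one_lt_natCast_of_twenty_le hn) 2).le
  · exact le_rfl

lemma poissonWeight_nonneg {θ : ℝ} (hθ : 0 ≤ θ) (x : ℕ) : 0 ≤ poissonWeight θ x := by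
  unfold poissonWeight; positivity

lemma poissonWeight_le_one {θ : ℝ} (hθ : 0 ≤ θ) (x : ℕ) : poissonWeight θ x ≤ 1 := by
  rw [poissonWeight, mul_div_right_comm, exp_neg, ← div_eq_mul_inv,
    div_le_one (exp_pos θ)]
  exact pow_div_factorial_le_exp θ hθ x

lemma sum_range_twenty_add_mixingWeight_mul (c : ℝ) (g : ℕ → ℝ) (N : ℕ) :
    ∑ n ∈ range (20 + N), mixingWeight c n * g n =
      ∑ i ∈ range N, mixingWeight c (20 + i) * g (20 + i) := by
  rw [sum_range_add, sum_eq_zero fun n hn => ?_, zero_add]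
  rw [mixingWeight, if_neg (by simpa using hn), zero_mul]

lemma le_log_log_twenty_of_tsum_mixingWeight_le_one {c : ℝ} (hc : 0 ≤ c)
    (hs : Summable (mixingWeight c)) (h : ∑' n, mixingWeight c n ≤ 1) : c ≤ log (log 20) := by
  have hL : 0 < log (log 20) := by linarith [log_log_twenty_gt]
  have hpartial : ∀ N : ℕ, c * ((log (log 20))⁻¹ - (log (log (20 + N)))⁻¹) ≤ 1 := fun N =>
    calc c * ((log (log 20))⁻¹ - (log (log (20 + N)))⁻¹)
        ≤ c * ∑ i ∈ range N, ((20 + i) * log (20 + i) * log (log (20 + i)) ^ 2)⁻¹ := by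
          gcongr
          exact inv_log_log_sub_le_sum exp_one_lt_twenty N
      _ = ∑ i ∈ range N, mixingWeight c (20 + i) := by
          rw [mul_sum]
          refine sum_congr rfl fun i _ => ?_
          rw [mixingWeight, if_pos (by omega), div_eq_mul_inv]
          push_cast
          ring
      _ = ∑ n ∈ range (20 + N), mixingWeight c n := by
          simpa using (sum_range_twenty_add_mixingWeight_mul c 1 N).symm
      _ ≤ 1 := (hs.sum_le_tsum _ fun n _ => mixingWeight_nonneg hc n).trans h
  have hlim : Tendsto (fun N : ℕ => c * ((log (log 20))⁻¹ - (log (log (20 + N)))⁻¹)) atTop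
      (𝓝 (c * ((log (log 20))⁻¹ - 0))) :=
    tendsto_const_nhds.mul <| tendsto_const_nhds.sub <| tendsto_inv_atTop_zero.comp <|
      tendsto_log_atTop.comp <| tendsto_log_atTop.comp <|
        tendsto_atTop_add_const_left _ 20 tendsto_natCast_atTop_atTop
  have := le_of_tendsto' hlim hpartial
  rwa [sub_zero, ← div_eq_mul_inv, div_le_one hL] at this

lemma mixingWeight_mul_poissonWeight_le {c : ℝ} (hc : 0 ≤ c) {n : ℕ} (hn : 20 ≤ n) (k : ℕ) :
    mixingWeight c n * poissonWeight (log n) (k + 1) ≤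
      c / (log (log 20) ^ 2 * (k + 1)!) * (log n ^ k / n ^ 2) := by
  have hn' : exp 1 < n := exp_one_lt_natCast_of_twenty_le hn
  have hn₀ : (0 : ℝ) < n := (exp_pos 1).trans hn'
  have hlog : 0 < log n := by linarith [one_lt_log_of_exp_one_lt hn']
  have hL : 0 < log (log 20) := by linarith [log_log_twenty_gt]
  have hLn : log (log 20) ≤ log (log n) :=
    log_le_log (log_pos (by norm_num)) (log_le_log (by norm_num) (by exact_mod_cast hn))
  calc mixingWeight c n * poissonWeight (log n) (k + 1)
      = c / (log (log n) ^ 2 * (k + 1)!) * (log n ^ k / n ^ 2) := by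
        rw [mixingWeight, if_pos hn, poissonWeight, exp_neg, exp_log hn₀]
        field_simp
        ring
    _ ≤ c / (log (log 20) ^ 2 * (k + 1)!) * (log n ^ k / n ^ 2) := by gcongr

lemma tsum_mixingWeight_mul_poissonWeight_le {c : ℝ} (hc : 0 ≤ c) (hcL : c ≤ log (log 20))
    {x : ℕ} (hx : 1 ≤ x) : ∑' n, mixingWeight c n * poissonWeight (log n) x ≤ 1 / x := by
  obtain ⟨k, rfl⟩ := Nat.exists_eq_add_of_le' hx
  set C := c / (log (log 20) ^ 2 * (k + 1)!)
  have hL : 21 / 20 < log (log 20) := log_log_twenty_gt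
  have hterm : ∀ n, 0 ≤ mixingWeight c n * poissonWeight (log n) (k + 1) := fun n =>
    mul_nonneg (mixingWeight_nonneg hc n) (poissonWeight_nonneg (log_natCast_nonneg n) _)
  refine (Real.tsum_le_of_sum_range_le hterm fun N => ?_).trans (b := C * (21 / 20 * k !)) ?_
  · calc ∑ n ∈ range N, mixingWeight c n * poissonWeight (log n) (k + 1)
        ≤ ∑ n ∈ range (20 + N), mixingWeight c n * poissonWeight (log n) (k + 1) :=
          sum_le_sum_of_subset_of_nonneg (range_subset_range.2 (by omega)) fun n _ _ => hterm n
      _ = ∑ i ∈ range N, mixingWeight c (20 + i) * poissonWeight (log ↑(20 + i)) (k + 1) :=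
          sum_range_twenty_add_mixingWeight_mul c _ N
      _ ≤ ∑ i ∈ range N, C * (log (20 + i) ^ k / (20 + i) ^ 2) :=
          sum_le_sum fun i _ => by
            simpa using mixingWeight_mul_poissonWeight_le hc (Nat.le_add_right 20 i) k
      _ ≤ C * (21 / 20 * k !) := by
          rw [← mul_sum]
          gcongr
          exact sum_log_pow_div_sq_le k N
  · have hL0 : 0 < log (log 20) := by linarith
    have hcL' : c * (21 / 20) ≤ log (log 20) ^ 2 := by nlinarith
    simp only [C, Nat.factorial_succ, Nat.cast_mul, Nat.cast_succ]
    rw [div_mul_eq_mul_div, div_le_div_iff₀ (by positivity) (by positivity)]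
    nlinarith [mul_le_mul_of_nonneg_right hcL' (by positivity : (0 : ℝ) ≤ (k + 1) * k !)]

lemma hasSum_poissonWeight_mul_pow (θ r : ℝ) :
    HasSum (fun x => poissonWeight θ x * r ^ x) (exp ((r - 1) * θ)) := by
  have h := (NormedSpace.expSeries_div_hasSum_exp (r * θ)).mul_left (exp (-θ))
  rw [← exp_eq_exp_ℝ, ← exp_add] at h
  have e : (fun x => poissonWeight θ x * r ^ x) = fun x => exp (-θ) * ((r * θ) ^ x / x !) := by
    funext x
    simp only [poissonWeight, mul_pow]
    ring
  rwa [e, show (r - 1) * θ = -θ + r * θ by ring]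

lemma summable_poissonWeight_mul_log {θ : ℝ} (hθ : 0 ≤ θ) :
    Summable fun x => poissonWeight θ x * log x := by
  refine (hasSum_poissonWeight_mul_pow θ 2).summable.of_nonneg_of_le
    (fun x => mul_nonneg (poissonWeight_nonneg hθ x) (log_natCast_nonneg x)) fun x => ?_
  gcongr
  · exact poissonWeight_nonneg hθ x
  · calc log x ≤ x := log_le_self x.cast_nonneg
      _ ≤ 2 ^ x := by exact_mod_cast x.lt_two_pow_self.le

lemma log_div_four_le_tsum_poissonWeight_mul_log {θ : ℝ} (hθ : 16 ≤ θ) :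
    log θ / 4 ≤ ∑' x, poissonWeight θ x * log x := by
  have hθ₀ : 0 ≤ θ := by linarith
  set s := √θ
  have hs : 4 ≤ s := by
    rw [show (4 : ℝ) = √16 by rw [show (16 : ℝ) = 4 ^ 2 by norm_num, sqrt_sq (by norm_num)]]
    exact sqrt_le_sqrt hθ
  have hss : s ^ 2 = θ := sq_sqrt hθ₀
  have hlogθ : 0 ≤ log θ := log_nonneg (by linarith)
  have he : exp (-1) ≤ 1 / 2 := by
    rw [exp_neg, inv_le_comm₀ (exp_pos 1) (by norm_num)]
    linarith [add_one_le_exp 1]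
  -- Chernoff: `1_{x < s} ≤ e^{s - x}`, and `E[e^{-X}] = e^{(e⁻¹ - 1) θ}` is tiny.
  have hpoint : ∀ x : ℕ, log θ / 2 * (1 - exp s * exp (-1) ^ x) ≤ log x := by
    intro x
    rcases le_or_gt s x with hx | hx
    · calc log θ / 2 * (1 - exp s * exp (-1) ^ x) ≤ log θ / 2 * 1 := by
            gcongr; linarith [mul_pos (exp_pos s) (pow_pos (exp_pos (-1)) x)]
        _ = log s := by rw [mul_one, log_sqrt hθ₀]
        _ ≤ log x := log_le_log (by linarith) hx
    · have : 1 ≤ exp s * exp (-1) ^ x := by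
        rw [← exp_nat_mul, ← exp_add, one_le_exp_iff]; linarith
      exact (mul_nonpos_of_nonneg_of_nonpos (by positivity) (by linarith)).trans
        (log_natCast_nonneg x)
  have hsum : HasSum (fun x => poissonWeight θ x * (log θ / 2 * (1 - exp s * exp (-1) ^ x)))
      (log θ / 2 * (1 - exp s * exp ((exp (-1) - 1) * θ))) := by
    have h1 := hasSum_poissonWeight_mul_pow θ 1
    have h2 := hasSum_poissonWeight_mul_pow θ (exp (-1))
    simp only [one_pow, mul_one, sub_self, zero_mul, exp_zero] at h1
    have e : (fun x => poissonWeight θ x * (log θ / 2 * (1 - exp s * exp (-1) ^ x))) =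
        fun x => log θ / 2 * (poissonWeight θ x - exp s * (poissonWeight θ x * exp (-1) ^ x)) := by
      funext x; ring
    rw [e]
    exact (h1.sub (h2.mul_left (exp s))).mul_left (log θ / 2)
  have htail : exp s * exp ((exp (-1) - 1) * θ) ≤ 1 / 2 := by
    rw [← exp_add]
    refine le_trans (exp_le_exp.2 ?_) he
    nlinarith
  calc log θ / 4 ≤ log θ / 2 * (1 - exp s * exp ((exp (-1) - 1) * θ)) := by nlinarith
    _ ≤ ∑' x, poissonWeight θ x * log x :=
        hasSum_le (fun x => mul_le_mul_of_nonneg_left (hpoint x) (poissonWeight_nonneg hθ₀ x))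
          hsum (summable_poissonWeight_mul_log hθ₀).hasSum

lemma not_summable_mixingWeight_mul_tsum_poissonWeight_mul_log {c : ℝ} (hc : 0 < c) :
    ¬ Summable fun n => mixingWeight c n * ∑' x, poissonWeight (log n) x * log x := by
  intro hs
  set N₀ := max 20 ⌈exp 16⌉₊
  have hN₀ : exp 1 < (N₀ : ℝ) := exp_one_lt_natCast_of_twenty_le (le_max_left _ _)
  refine not_summable_inv_mul_log_mul_log_log hN₀ <|
    ((summable_nat_add_iff N₀).2 hs |>.mul_left (4 / c)).of_nonneg_of_le (fun i => ?_) fun i => ?_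
  · simpa only [pow_one] using
      (inv_pos.2 (mul_log_mul_log_log_pow_pos (hN₀.trans_le (by simp)) 1)).le
  · have hn : 20 ≤ i + N₀ := (le_max_left _ _).trans (Nat.le_add_left _ _)
    have hn' : exp 1 < ((i + N₀ : ℕ) : ℝ) := exp_one_lt_natCast_of_twenty_le hn
    have hθ : 16 ≤ log ((i + N₀ : ℕ) : ℝ) := by
      rw [le_log_iff_exp_le (by linarith [exp_pos 1])]
      exact (Nat.le_ceil _).trans (by exact_mod_cast (le_max_right _ _).trans (Nat.le_add_left _ _))
    calc ((N₀ + i) * log (N₀ + i) * log (log (N₀ + i)))⁻¹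
        = 4 / c * (mixingWeight c (i + N₀) * (log (log ((i + N₀ : ℕ) : ℝ)) / 4)) := by
          rw [mixingWeight, if_pos hn]
          push_cast
          rw [add_comm (i : ℝ)]
          field_simp
      _ ≤ 4 / c * (mixingWeight c (i + N₀) *
            ∑' x, poissonWeight (log ((i + N₀ : ℕ) : ℝ)) x * log x) := by
          gcongr
          · exact mixingWeight_nonneg hc.le _
          · exact log_div_four_le_tsum_poissonWeight_mul_log hθ

lemma tendsto_sum_range_tsum_atTop {f : ℕ → ℕ → ℝ} (hf : ∀ n x, 0 ≤ f n x)
    (hcol : ∀ x, Summable fun n => f n x) (hrow : ∀ n, Summable (f n))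
    (hdiv : ¬ Summable fun n => ∑' x, f n x) :
    Tendsto (fun N => ∑ x ∈ range N, ∑' n, f n x) atTop atTop := by
  refine tendsto_atTop_atTop_of_monotone (fun M N hMN => sum_le_sum_of_subset_of_nonneg
    (range_subset_range.2 hMN) fun x _ _ => tsum_nonneg (hf · x)) fun b => ?_
  obtain ⟨M, hM⟩ := (((not_summable_iff_tendsto_nat_atTop_of_nonneg fun n =>
    tsum_nonneg (hf n)).1 hdiv).eventually_gt_atTop b).exists
  have hlim : Tendsto (fun N => ∑ n ∈ range M, ∑ x ∈ range N, f n x) atTop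
      (𝓝 (∑ n ∈ range M, ∑' x, f n x)) :=
    tendsto_finsetSum _ fun n _ => (hrow n).hasSum.tendsto_sum_nat
  obtain ⟨N, hN⟩ := (hlim.eventually (eventually_gt_nhds hM)).exists
  refine ⟨N, hN.le.trans ?_⟩
  rw [sum_comm]
  exact sum_le_sum fun x _ => (hcol x).sum_le_tsum _ fun n _ => hf n x

lemma tendsto_sum_mul_log_atBot {p : ℕ → ℝ} (hp₀ : ∀ x, 0 ≤ p x)
    (hp : ∀ x : ℕ, 1 ≤ x → p x ≤ 1 / x)
    (hdiv : Tendsto (fun N => ∑ x ∈ range N, p x * log x) atTop atTop) :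
    Tendsto (fun N => ∑ x ∈ range N, p x * log (p x)) atTop atBot := by
  have hterm : ∀ x : ℕ, 1 ≤ x → p x * log (p x) ≤ -(p x * log x) := fun x hx => by
    rcases (hp₀ x).eq_or_lt with h | h
    · simp [← h]
    · rw [← mul_neg, ← log_inv, ← one_div]
      exact mul_le_mul_of_nonneg_left (log_le_log h (hp x hx)) h.le
  rw [← tendsto_add_atTop_iff_nat 1]
  refine tendsto_atBot_mono (fun N => ?_) <| tendsto_atBot_add_const_left _ (p 0 * log (p 0)) <|
    tendsto_neg_atTop_atBot.comp <| (tendsto_add_atTop_iff_nat 1).2 hdiv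
  simp only [Function.comp_apply, sum_range_succ' _ N, Nat.cast_zero, log_zero, mul_zero,
    add_zero, ← sum_neg_distrib]
  rw [add_comm]
  gcongr with x
  exact hterm (x + 1) (by omega)

end PoissonMixture

open PoissonMixture in
/-- For the Poisson mixture with mixing distribution putting mass
`c{n(log n)(log log n)²}⁻¹` at `log n` for `n ≥ 20`, the mixture probability
mass function satisfies `f(x;G*) ≤ 1/x` for all `x ≥ 1` and consequently
`E*[log f(X;G*)] = −∞`. -/
theorem poisson_mixture_infinite_KL
    (c : ℝ) (hc : 0 < c)
    (w : ℕ → ℝ)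
    (hw : ∀ n : ℕ, w n =
      if 20 ≤ n then c / (n * Real.log n * (Real.log (Real.log n)) ^ 2) else 0)
    -- `c` is a normalizing constant
    (hnorm : ∑' n : ℕ, w n = 1)
    (p : ℕ → ℝ)
    (hp : ∀ x : ℕ, p x = ∑' n : ℕ,
      w n * (Real.log n) ^ x * Real.exp (-(Real.log n)) / (Nat.factorial x)) :
    (∀ x : ℕ, 1 ≤ x → p x ≤ 1 / x) ∧
    Tendsto (fun N => ∑ x ∈ Finset.range N, p x * Real.log (p x))
      atTop atBot := by
  obtain rfl : w = mixingWeight c := funext hw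
  obtain rfl : p = fun x => ∑' n, mixingWeight c n * poissonWeight (Real.log n) x :=
    funext fun x => (hp x).trans <| tsum_congr fun n => by rw [poissonWeight]; ring
  have hsum : Summable (mixingWeight c) := by
    by_contra h
    simp [tsum_eq_zero_of_not_summable h] at hnorm
  have hθ (n : ℕ) : 0 ≤ Real.log n := Real.log_natCast_nonneg n
  have hterm (n x : ℕ) : 0 ≤ mixingWeight c n * poissonWeight (Real.log n) x :=
    mul_nonneg (mixingWeight_nonneg hc.le n) (poissonWeight_nonneg (hθ n) x)
  have hbound (x : ℕ) (hx : 1 ≤ x) :=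
    tsum_mixingWeight_mul_poissonWeight_le hc.le
      (le_log_log_twenty_of_tsum_mixingWeight_le_one hc.le hsum hnorm.le) hx
  have hcol (x : ℕ) : Summable fun n => mixingWeight c n * poissonWeight (Real.log n) x :=
    hsum.of_nonneg_of_le (hterm · x) fun n =>
      mul_le_of_le_one_right (mixingWeight_nonneg hc.le n) (poissonWeight_le_one (hθ n) x)
  refine ⟨hbound, tendsto_sum_mul_log_atBot (fun x => tsum_nonneg (hterm · x)) hbound ?_⟩
  have hdiv := tendsto_sum_range_tsum_atTop
    (f := fun n x => mixingWeight c n * poissonWeight (Real.log n) x * Real.log x)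
    (fun n x => mul_nonneg (hterm n x) (Real.log_natCast_nonneg x))
    (fun x => (hcol x).mul_right _)
    (fun n => by simpa only [mul_assoc] using (summable_poissonWeight_mul_log (hθ n)).mul_left _)
    (by simpa only [mul_assoc, tsum_mul_left] using
      not_summable_mixingWeight_mul_tsum_poissonWeight_mul_log hc)
  simpa only [tsum_mul_right] using hdiv
end

section
/- Let x₁, …, x_n be i.i.d. from an absolutely continuous distribution F with continuous density f bounded by M, and let F_n be the empirical distribution function. Then almost surely, for all n large enough and uniformly over all ε > 0, sup_{θ∈ℝ} {F_n(θ + ε) − F_n(θ)} ≤ 2Mε + 10 n^{−1} log n. -/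
/-!
Let `F` be the distribution function of the law of the sample. A density bounded by `M` makes `F`
`M`-Lipschitz, hence continuous, so `F(x_i)` falls in `[u, v]` with probability at most `v - u`.
An increment `F_n(θ + ε) - F_n(θ)` only counts points with `F(x_i) ∈ [F θ, F (θ + ε)]`, an interval
covered by a grid interval `[a/n, (a+d)/n]` with `d ≤ nMε + 2`. For each of the `(n+1)²` grid
intervals, a Chernoff bound at `t = log 2` shows that at least `2d + 8 log n` hits have
probability at most `n⁻⁵`; Borel–Cantelli then makes all grid counts small for all large `n`,
and `2d + 8 log n ≤ 2nMε + 10 log n` as soon as `log n ≥ 2`.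
-/

open MeasureTheory Filter ProbabilityTheory
open Set Real

theorem measure_preimage_cdf_Icc_le (ν : Measure ℝ) [IsProbabilityMeasure ν]
    (hc : Continuous (cdf ν)) (u v : ℝ) :
    ν (cdf ν ⁻¹' Icc u v) ≤ ENNReal.ofReal (v - u) := by
  rw [(hc.measurable measurableSet_Icc).measure_eq_iSup_isCompact]
  refine iSup₂_le fun K hKS => iSup_le fun hK => ?_
  rcases K.eq_empty_or_nonempty with rfl | hne
  · simp
  have hlo : u ≤ cdf ν (sInf K) := (hKS (hK.sInf_mem hne)).1
  have hhi : cdf ν (sSup K) ≤ v := (hKS (hK.sSup_mem hne)).2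
  calc ν K ≤ ν (Icc (sInf K) (sSup K)) :=
        measure_mono fun x hx => ⟨csInf_le hK.bddBelow hx, le_csSup hK.bddAbove hx⟩
    _ = (cdf ν).measure (Icc (sInf K) (sSup K)) := by rw [measure_cdf]
    _ = ENNReal.ofReal (cdf ν (sSup K) - cdf ν (sInf K)) := by
        rw [StieltjesFunction.measure_Icc,
          leftLim_eq_of_tendsto ((hc.tendsto _).mono_left nhdsWithin_le_nhds)]
    _ ≤ ENNReal.ofReal (v - u) := ENNReal.ofReal_le_ofReal (by linarith)

theorem withDensity_ofReal_Ioc_le {f : ℝ → ℝ} {M : ℝ} (hM0 : 0 ≤ M) (hM : ∀ x, f x ≤ M)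
    (x y : ℝ) :
    volume.withDensity (fun t => ENNReal.ofReal (f t)) (Ioc x y) ≤
      ENNReal.ofReal (M * (y - x)) := by
  calc volume.withDensity (fun t => ENNReal.ofReal (f t)) (Ioc x y)
      = ∫⁻ t in Ioc x y, ENNReal.ofReal (f t) := withDensity_apply _ measurableSet_Ioc
    _ ≤ ∫⁻ _ in Ioc x y, ENNReal.ofReal M :=
        setLIntegral_mono measurable_const fun t _ => ENNReal.ofReal_le_ofReal (hM t)
    _ = ENNReal.ofReal (M * (y - x)) := by
        rw [setLIntegral_const, Real.volume_Ioc, ← ENNReal.ofReal_mul hM0]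

theorem cdf_sub_le_of_measure_Ioc_le {ν : Measure ℝ} [IsProbabilityMeasure ν] {M : ℝ}
    (hM0 : 0 ≤ M) (hν : ∀ x y, ν (Ioc x y) ≤ ENNReal.ofReal (M * (y - x))) {x y : ℝ}
    (hxy : x ≤ y) :
    cdf ν y - cdf ν x ≤ M * (y - x) := by
  have h : (cdf ν).measure (Ioc x y) ≤ ENNReal.ofReal (M * (y - x)) := by
    rw [measure_cdf]; exact hν x y
  rwa [StieltjesFunction.measure_Ioc,
    ENNReal.ofReal_le_ofReal_iff (mul_nonneg hM0 (sub_nonneg.2 hxy))] at h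

theorem lipschitzWith_cdf_of_measure_Ioc_le {ν : Measure ℝ} [IsProbabilityMeasure ν] {M : ℝ}
    (hM0 : 0 ≤ M) (hν : ∀ x y, ν (Ioc x y) ≤ ENNReal.ofReal (M * (y - x))) :
    LipschitzWith M.toNNReal (cdf ν) := by
  refine LipschitzWith.of_le_add_mul _ fun x y => ?_
  rw [Real.coe_toNNReal M hM0, Real.dist_eq]
  rcases le_total x y with hxy | hyx
  · linarith [monotone_cdf ν hxy, mul_nonneg hM0 (abs_nonneg (x - y))]
  · linarith [cdf_sub_le_of_measure_Ioc_le hM0 hν hyx,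
      mul_le_mul_of_nonneg_left (le_abs_self (x - y)) hM0]

theorem exists_grid_Icc_superset {u v : ℝ} (hu : 0 ≤ u) (huv : u ≤ v) (hv : v ≤ 1) {n : ℕ}
    (hn : 0 < n) : ∃ a d : ℕ, a ≤ n ∧ d ≤ n ∧
      Icc u v ⊆ Icc ((a : ℝ) / n) ((a + d : ℝ) / n) ∧ (d : ℝ) ≤ n * (v - u) + 2 := by
  have hnR : (0 : ℝ) < n := Nat.cast_pos.2 hn
  have ha : (⌊n * u⌋₊ : ℝ) ≤ n * u := Nat.floor_le (by positivity)
  have ha' : n * u < ⌊n * u⌋₊ + 1 := Nat.lt_floor_add_one _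
  have hb : n * v ≤ ⌈n * v⌉₊ := Nat.le_ceil _
  have hb' : (⌈n * v⌉₊ : ℝ) < n * v + 1 := Nat.ceil_lt_add_one (by nlinarith)
  have hbn : ⌈n * v⌉₊ ≤ n := Nat.ceil_le.2 (by nlinarith)
  have hab : ⌊n * u⌋₊ ≤ ⌈n * v⌉₊ := by
    exact_mod_cast ha.trans ((mul_le_mul_of_nonneg_left huv hnR.le).trans hb)
  obtain ⟨d, hd⟩ := Nat.exists_eq_add_of_le hab
  rw [hd] at hb hb' hbn
  push_cast at hb hb'
  refine ⟨⌊n * u⌋₊, d, by omega, by omega, Icc_subset_Icc ?_ ?_, by linarith⟩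
  · rw [div_le_iff₀ hnR]; linarith
  · rw [le_div_iff₀ hnR]; linarith

theorem ite_sub_ite_le_indicator {G : ℝ → ℝ} (hG : Monotone G) {s : Set ℝ} {θ θ' : ℝ}
    (hs : Icc (G θ) (G θ') ⊆ s) (x : ℝ) :
    ((if x ≤ θ' then 1 else 0) - if x ≤ θ then 1 else 0 : ℝ) ≤ s.indicator 1 (G x) := by
  have hnonneg : 0 ≤ s.indicator (1 : ℝ → ℝ) (G x) := indicator_nonneg (fun _ _ => zero_le_one) _
  by_cases hθ : x ≤ θ
  · split_ifs <;> linarith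
  by_cases hθ' : x ≤ θ'
  · rw [if_pos hθ', if_neg hθ, indicator_of_mem (hs ⟨hG (not_le.1 hθ).le, hG hθ'⟩)]
    norm_num
  · simp [hθ, hθ', hnonneg]

theorem two_le_log_of_eight_le {x : ℝ} (hx : 8 ≤ x) : 2 ≤ log x := by
  rw [le_log_iff_exp_le (by linarith)]
  calc exp 2 = exp 1 ^ 2 := by rw [← exp_nat_mul]; norm_num
    _ ≤ 8 := by nlinarith [exp_one_lt_d9, exp_pos 1]
    _ ≤ x := hx

theorem exp_mul_indicator_one {α : Type*} (s : Set α) (t : ℝ) (x : α) :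
    exp (t * s.indicator 1 x) = 1 + (exp t - 1) * s.indicator 1 x := by
  by_cases hx : x ∈ s <;> simp [hx]

section Sampling

variable {Ω : Type*} [MeasurableSpace Ω] {P : Measure Ω} [IsProbabilityMeasure P]

theorem mgf_indicator_one {A : Set Ω} (hA : MeasurableSet A) (t : ℝ) :
    mgf (A.indicator 1) P t = 1 + (exp t - 1) * P.real A := by
  simp only [mgf, exp_mul_indicator_one]
  rw [integral_add (integrable_const 1) (((integrable_const 1).indicator hA).const_mul _),
    integral_const_mul, integral_indicator_one hA]
  simp

theorem measure_sum_indicator_ge_le {ι : Type*} {U : ι → Ω → ℝ} (hU : ∀ i, Measurable (U i))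
    (hindep : iIndepFun U P) {s : Set ℝ} (hs : MeasurableSet s) {q : ℝ}
    (hq : ∀ i, P.real (U i ⁻¹' s) ≤ q) (S : Finset ι) {t : ℝ} (ht : 0 ≤ t) (k : ℝ) :
    P.real {ω | k ≤ ∑ i ∈ S, s.indicator 1 (U i ω)} ≤
      exp (-t * k + (exp t - 1) * S.card * q) := by
  set Y : ι → Ω → ℝ := fun i => (U i ⁻¹' s).indicator 1
  have hY : ∀ i, Measurable (Y i) := fun i => measurable_one.indicator (hU i hs)
  have hYindep : iIndepFun Y P :=
    hindep.comp (fun _ => s.indicator 1) fun _ => measurable_one.indicator hs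
  have hexp_int : ∀ i ∈ S, Integrable (fun ω => exp (t * Y i ω)) P := fun i _ => by
    simp only [Y, exp_mul_indicator_one]
    exact (integrable_const 1).add (((integrable_const 1).indicator (hU i hs)).const_mul _)
  have hmgf : ∀ i, mgf (Y i) P t ≤ exp ((exp t - 1) * q) := fun i => by
    rw [mgf_indicator_one (hU i hs)]
    have : 0 ≤ exp t - 1 := by linarith [one_le_exp ht]
    linarith [add_one_le_exp ((exp t - 1) * q), mul_le_mul_of_nonneg_left (hq i) this]
  calc P.real {ω | k ≤ ∑ i ∈ S, s.indicator 1 (U i ω)}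
      = P.real {ω | k ≤ (∑ i ∈ S, Y i) ω} := by simp only [Finset.sum_apply]; rfl
    _ ≤ exp (-t * k) * mgf (∑ i ∈ S, Y i) P t :=
        measure_ge_le_exp_mul_mgf k ht (hYindep.integrable_exp_mul_sum hY hexp_int)
    _ ≤ exp (-t * k) * ∏ _i ∈ S, exp ((exp t - 1) * q) := by
        rw [hYindep.mgf_sum hY]
        gcongr with i
        · exact fun _ _ => mgf_nonneg
        · exact hmgf i
    _ = exp (-t * k + (exp t - 1) * S.card * q) := by
        rw [Finset.prod_const, ← exp_nat_mul, ← exp_add]; ring_nf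

noncomputable def gridCount (U : ℕ → Ω → ℝ) (n a d : ℕ) (ω : Ω) : ℝ :=
  ∑ i ∈ Finset.range n, (Icc ((a : ℝ) / n) ((a + d : ℝ) / n)).indicator 1 (U i ω)

variable {U : ℕ → Ω → ℝ}

theorem measure_gridCount_ge_le (hU : ∀ i, Measurable (U i)) (hindep : iIndepFun U P)
    (hunif : ∀ i u v, P (U i ⁻¹' Icc u v) ≤ ENNReal.ofReal (v - u)) {n : ℕ} (hn : 0 < n)
    (a d : ℕ) : P.real {ω | 2 * d + 8 * log n ≤ gridCount U n a d ω} ≤ ((n : ℝ) ^ 5)⁻¹ := by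
  have hnR : (0 : ℝ) < n := Nat.cast_pos.2 hn
  have hq : ∀ i, P.real (U i ⁻¹' Icc ((a : ℝ) / n) ((a + d : ℝ) / n)) ≤ d / n := fun i =>
    ENNReal.toReal_le_of_le_ofReal (by positivity) ((hunif i _ _).trans_eq (by ring_nf))
  have hchernoff := measure_sum_indicator_ge_le hU hindep measurableSet_Icc hq
    (Finset.range n) (log_nonneg one_le_two) (2 * d + 8 * log n)
  rw [exp_log two_pos, Finset.card_range] at hchernoff
  have hpow : ((n : ℝ) ^ 5)⁻¹ = exp (-(5 * log n)) := by
    rw [exp_neg, show (5 : ℝ) * log n = log (n ^ 5) by rw [log_pow]; norm_num,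
      exp_log (by positivity)]
  refine hchernoff.trans (hpow ▸ exp_le_exp.2 ?_)
  have hd : (2 - 1) * n * (d / n) = (d : ℝ) := by field_simp; ring
  -- `log 2 > 0.69`, so `2 log 2 ≥ 1` absorbs the mean `d` and `8 log 2 ≥ 5`.
  nlinarith [log_two_gt_d9, log_nonneg (Nat.one_le_cast.2 hn), Nat.cast_nonneg (α := ℝ) d]

theorem measure_exists_gridCount_ge_le (hU : ∀ i, Measurable (U i)) (hindep : iIndepFun U P)
    (hunif : ∀ i u v, P (U i ⁻¹' Icc u v) ≤ ENNReal.ofReal (v - u)) (n : ℕ) :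
    P {ω | ∃ a ≤ n, ∃ d ≤ n, 2 * d + 8 * log n ≤ gridCount U n a d ω} ≤
      ENNReal.ofReal (16 / ((n : ℝ) + 1) ^ 2) := by
  rcases Nat.eq_zero_or_pos n with rfl | hn
  · exact prob_le_one.trans (by norm_num)
  have hpair : ∀ a d, P {ω | 2 * d + 8 * log n ≤ gridCount U n a d ω} ≤
      ENNReal.ofReal ((n : ℝ) ^ 5)⁻¹ := fun a d =>
    (ENNReal.le_ofReal_iff_toReal_le (measure_ne_top _ _) (by positivity)).2
      (measure_gridCount_ge_le hU hindep hunif hn a d)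
  have hsub : {ω | ∃ a ≤ n, ∃ d ≤ n, 2 * d + 8 * log n ≤ gridCount U n a d ω} ⊆
      ⋃ a ∈ Finset.range (n + 1), ⋃ d ∈ Finset.range (n + 1),
        {ω | 2 * d + 8 * log n ≤ gridCount U n a d ω} := by
    rintro ω ⟨a, ha, d, hd, hω⟩
    simp only [mem_iUnion, Finset.mem_range]
    exact ⟨a, Nat.lt_succ_of_le ha, d, Nat.lt_succ_of_le hd, hω⟩
  calc _ ≤ ∑ a ∈ Finset.range (n + 1), ∑ d ∈ Finset.range (n + 1),
        P {ω | 2 * d + 8 * log n ≤ gridCount U n a d ω} :=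
        (measure_mono hsub).trans <| (measure_biUnion_finset_le _ _).trans
          (Finset.sum_le_sum fun a _ => measure_biUnion_finset_le _ _)
    _ ≤ ∑ _a ∈ Finset.range (n + 1), ∑ _d ∈ Finset.range (n + 1),
        ENNReal.ofReal ((n : ℝ) ^ 5)⁻¹ := by gcongr with a _ d _; exact hpair a d
    _ = ENNReal.ofReal (((n : ℝ) + 1) ^ 2 * ((n : ℝ) ^ 5)⁻¹) := by
        simp only [Finset.sum_const, Finset.card_range, nsmul_eq_mul]
        rw [ENNReal.ofReal_mul (by positivity), ENNReal.ofReal_pow (by positivity),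
          ← mul_assoc, ← sq, ENNReal.ofReal_add (by positivity) zero_le_one]
        simp
    _ ≤ ENNReal.ofReal (16 / ((n : ℝ) + 1) ^ 2) := by
        have h1 : (1 : ℝ) ≤ n := Nat.one_le_cast.2 hn
        apply ENNReal.ofReal_le_ofReal
        rw [← div_eq_mul_inv, div_le_div_iff₀ (by positivity) (by positivity)]
        nlinarith [pow_le_pow_left₀ (by positivity) (by linarith : (n : ℝ) + 1 ≤ 2 * n) 4,
          pow_le_pow_right₀ h1 (by norm_num : 4 ≤ 5)]

theorem ae_eventually_gridCount_lt (hU : ∀ i, Measurable (U i)) (hindep : iIndepFun U P)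
    (hunif : ∀ i u v, P (U i ⁻¹' Icc u v) ≤ ENNReal.ofReal (v - u)) :
    ∀ᵐ ω ∂P, ∀ᶠ n in atTop, ∀ a ≤ n, ∀ d ≤ n, gridCount U n a d ω < 2 * d + 8 * log n := by
  have hsummable : Summable fun n : ℕ => 16 / ((n : ℝ) + 1) ^ 2 := by
    have := (summable_nat_add_iff 1).2 (Real.summable_one_div_nat_pow.2 one_lt_two)
    simpa [div_eq_mul_inv] using this.mul_left 16
  have hsum : ∑' n : ℕ, P {ω | ∃ a ≤ n, ∃ d ≤ n, 2 * d + 8 * log n ≤ gridCount U n a d ω} ≠ ⊤ := by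
    refine ne_top_of_le_ne_top ?_
      (ENNReal.tsum_le_tsum (measure_exists_gridCount_ge_le hU hindep hunif))
    rw [← ENNReal.ofReal_tsum_of_nonneg (fun n => by positivity) hsummable]
    exact ENNReal.ofReal_ne_top
  filter_upwards [ae_eventually_notMem hsum] with ω hω
  filter_upwards [hω] with n hn a ha d hd
  by_contra! hge
  exact hn ⟨a, ha, d, hd, hge⟩

end Sampling

theorem empirical_df_uniform_spacing_general
    (f : ℝ → ℝ) (hf0 : ∀ x, 0 ≤ f x)
    (M : ℝ) (hM : ∀ x, f x ≤ M)
    (ν : Measure ℝ)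
    (hν : ν = volume.withDensity (fun x => ENNReal.ofReal (f x)))
    {Ω : Type*} [MeasurableSpace Ω] (P : Measure Ω) [IsProbabilityMeasure P]
    (X : ℕ → Ω → ℝ) (hXm : ∀ i, Measurable (X i))
    (hindep : iIndepFun X P)
    (hdist : ∀ i, Measure.map (X i) P = ν)
    -- the empirical distribution function
    (Fn : ℕ → Ω → ℝ → ℝ)
    (hFn : ∀ n ω θ, Fn n ω θ =
      (n : ℝ)⁻¹ * ∑ i ∈ Finset.range n, if X i ω ≤ θ then (1 : ℝ) else 0) :
    ∀ᵐ ω ∂P, ∀ᶠ n in atTop, ∀ ε > (0 : ℝ), ∀ θ : ℝ,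
      Fn n ω (θ + ε) - Fn n ω θ ≤
        2 * M * ε + 10 * Real.log n / n := by
  have hM0 : 0 ≤ M := (hf0 0).trans (hM 0)
  have : IsProbabilityMeasure ν :=
    hdist 0 ▸ Measure.isProbabilityMeasure_map (hXm 0).aemeasurable
  have hIoc : ∀ x y, ν (Ioc x y) ≤ ENNReal.ofReal (M * (y - x)) :=
    hν ▸ withDensity_ofReal_Ioc_le hM0 hM
  have hF : Continuous (cdf ν) := (lipschitzWith_cdf_of_measure_Ioc_le hM0 hIoc).continuous
  have hunif : ∀ i u v, P ((cdf ν ∘ X i) ⁻¹' Icc u v) ≤ ENNReal.ofReal (v - u) := fun i u v => by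
    rw [preimage_comp, ← Measure.map_apply (hXm i) (hF.measurable measurableSet_Icc), hdist i]
    exact measure_preimage_cdf_Icc_le ν hF u v
  filter_upwards [ae_eventually_gridCount_lt (fun i => hF.measurable.comp (hXm i))
    (hindep.comp (fun _ => cdf ν) fun _ => hF.measurable) hunif] with ω hω
  filter_upwards [hω, eventually_ge_atTop 8] with n hcount hn ε hε θ
  have hnR : (8 : ℝ) ≤ n := by exact_mod_cast hn
  obtain ⟨a, d, ha, hd, hsub, hdle⟩ := exists_grid_Icc_superset (cdf_nonneg ν θ)
    (monotone_cdf ν (by linarith : θ ≤ θ + ε)) (cdf_le_one ν _) (by omega : 0 < n)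
  have hcdf := cdf_sub_le_of_measure_Ioc_le hM0 hIoc (by linarith : θ ≤ θ + ε)
  have hlog := two_le_log_of_eight_le hnR
  calc Fn n ω (θ + ε) - Fn n ω θ ≤ (n : ℝ)⁻¹ * gridCount (fun i => cdf ν ∘ X i) n a d ω := by
        rw [hFn, hFn, ← mul_sub, ← Finset.sum_sub_distrib, gridCount]
        gcongr with i
        exact ite_sub_ite_le_indicator (monotone_cdf ν) hsub (X i ω)
    _ ≤ (n : ℝ)⁻¹ * (2 * d + 8 * log n) := by gcongr; exact (hcount a ha d hd).le
    _ ≤ 2 * M * ε + 10 * Real.log n / n := by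
        rw [inv_mul_le_iff₀ (by linarith), mul_add, mul_div_cancel₀ _ (by linarith)]
        nlinarith

/-- Uniform spacing bound for the empirical distribution function: for an
i.i.d. sample from a continuous density bounded by `M`, almost surely for all
large `n` and uniformly over all `ε > 0` and all `θ`,
`F_n(θ+ε) − F_n(θ) ≤ 2Mε + 10 n⁻¹ log n`. -/
theorem empirical_df_uniform_spacing
    (f : ℝ → ℝ) (hfc : Continuous f) (hf0 : ∀ x, 0 ≤ f x)
    (hfd : ∫ x, f x = 1)
    (M : ℝ) (hM : ∀ x, f x ≤ M)
    (ν : Measure ℝ)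
    (hν : ν = volume.withDensity (fun x => ENNReal.ofReal (f x)))
    {Ω : Type*} [MeasurableSpace Ω] (P : Measure Ω) [IsProbabilityMeasure P]
    (X : ℕ → Ω → ℝ) (hXm : ∀ i, Measurable (X i))
    (hindep : iIndepFun X P)
    (hdist : ∀ i, Measure.map (X i) P = ν)
    -- the empirical distribution function
    (Fn : ℕ → Ω → ℝ → ℝ)
    (hFn : ∀ n ω θ, Fn n ω θ =
      (n : ℝ)⁻¹ * ∑ i ∈ Finset.range n, if X i ω ≤ θ then (1 : ℝ) else 0) :
    ∀ᵐ ω ∂P, ∀ᶠ n in atTop, ∀ ε > (0 : ℝ), ∀ θ : ℝ,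
      Fn n ω (θ + ε) - Fn n ω θ ≤
        2 * M * ε + 10 * Real.log n / n :=
  empirical_df_uniform_spacing_general f hf0 M hM ν hν P X hXm hindep hdist Fn hFn
end

section
/- For the normal density: if |x − θ₁| ≥ σ₁|log σ₁| and σ₁ ≤ ε₀ with ε₀ small enough that exp{−(1/4)(log σ₁ + 2)² + 1} ≤ (2ε₀)^{−1} for all σ₁ ≤ ε₀, then φ(x; θ₁, σ₁²) ≤ φ(x; θ₁, 2ε₀²). -/
open Real

/-- The normal density with mean `θ` and standard deviation `σ`. -/
noncomputable def gaussSD (x θ σ : ℝ) : ℝ :=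
  (Real.sqrt (2 * Real.pi * σ ^ 2))⁻¹ * Real.exp (-(x - θ) ^ 2 / (2 * σ ^ 2))

/-! Half of the exponent `d²/(2σ²)` absorbs the widening of `σ` to `ε`; the other half, since
`|d| ≥ σ |log σ|`, is at least `(log σ)²/4`. The resulting factor `exp(-(log σ)²/4)` together
with the normalisation `σ⁻¹` is `exp(-(log σ + 2)²/4 + 1)`, which the smallness assumption on `ε`
bounds by `(2ε)⁻¹ ≤ (√2 ε)⁻¹`, the normalisation of the wide density. -/

lemma gaussSD_eq_of_pos (x θ : ℝ) {σ : ℝ} (hσ : 0 < σ) :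
    gaussSD x θ σ = (√(2 * π))⁻¹ * (σ⁻¹ * exp (-(x - θ) ^ 2 / (2 * σ ^ 2))) := by
  rw [gaussSD, sqrt_mul (by positivity), sqrt_sq hσ.le, mul_inv, mul_assoc]

lemma sq_div_add_log_sq_le_of_le_abs {d σ ε : ℝ} (hσ : 0 < σ) (hσε : σ ≤ ε)
    (hd : σ * |log σ| ≤ |d|) :
    d ^ 2 / (4 * ε ^ 2) + log σ ^ 2 / 4 ≤ d ^ 2 / (2 * σ ^ 2) := by
  have hwiden : d ^ 2 / (4 * ε ^ 2) ≤ d ^ 2 / (4 * σ ^ 2) := by gcongr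
  have hlog : log σ ^ 2 / 4 ≤ d ^ 2 / (4 * σ ^ 2) := by
    have : (σ * log σ) ^ 2 ≤ d ^ 2 := by
      rw [← sq_abs d, ← sq_abs (σ * log σ), abs_mul, abs_of_pos hσ]
      gcongr
    rw [le_div_iff₀ (by positivity)]
    nlinarith
  have hsplit : d ^ 2 / (2 * σ ^ 2) = d ^ 2 / (4 * σ ^ 2) + d ^ 2 / (4 * σ ^ 2) := by
    field_simp; ring
  linarith

lemma inv_mul_exp_neg_log_sq {σ : ℝ} (hσ : 0 < σ) :
    σ⁻¹ * exp (-(log σ ^ 2 / 4)) = exp (-(1 / 4) * (log σ + 2) ^ 2 + 1) := by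
  rw [← exp_log (inv_pos.2 hσ), log_inv, ← exp_add]
  ring_nf

theorem gauss_tail_bound_general
    (x θ₁ σ₁ ε₀ : ℝ) (hσ₁ : 0 < σ₁)
    (hx : σ₁ * |Real.log σ₁| ≤ |x - θ₁|) (hσε : σ₁ ≤ ε₀)
    (hsmall : ∀ s : ℝ, 0 < s → s ≤ ε₀ →
      Real.exp (-(1 / 4) * (Real.log s + 2) ^ 2 + 1) ≤ (2 * ε₀)⁻¹) :
    gaussSD x θ₁ σ₁ ≤ gaussSD x θ₁ (Real.sqrt 2 * ε₀) := by
  have hε₀ : 0 < ε₀ := hσ₁.trans_le hσε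
  have hwide : 2 * (√2 * ε₀) ^ 2 = 4 * ε₀ ^ 2 := by
    rw [mul_pow, sq_sqrt zero_le_two]; ring
  have hsqrt_two : √2 ≤ 2 := sqrt_le_iff.2 ⟨zero_le_two, by norm_num⟩
  rw [gaussSD_eq_of_pos _ _ hσ₁, gaussSD_eq_of_pos _ _ (by positivity), hwide]
  gcongr (√(2 * π))⁻¹ * ?_
  have hexp := sq_div_add_log_sq_le_of_le_abs hσ₁ hσε hx
  calc σ₁⁻¹ * exp (-(x - θ₁) ^ 2 / (2 * σ₁ ^ 2))
      ≤ σ₁⁻¹ * exp (-(log σ₁ ^ 2 / 4)) * exp (-(x - θ₁) ^ 2 / (4 * ε₀ ^ 2)) := by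
        rw [mul_assoc, ← exp_add]
        gcongr
        rw [neg_div, neg_div]
        linarith
    _ ≤ (2 * ε₀)⁻¹ * exp (-(x - θ₁) ^ 2 / (4 * ε₀ ^ 2)) := by
        rw [inv_mul_exp_neg_log_sq hσ₁]
        gcongr
        exact hsmall σ₁ hσ₁ hσε
    _ ≤ (√2 * ε₀)⁻¹ * exp (-(x - θ₁) ^ 2 / (4 * ε₀ ^ 2)) := by gcongr

/-- If `|x − θ₁| ≥ σ₁|log σ₁|` and `σ₁ ≤ ε₀` with `ε₀` small enough that
`exp{−(1/4)(log σ₁ + 2)² + 1} ≤ (2ε₀)⁻¹` for all `σ₁ ≤ ε₀`, then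
`φ(x; θ₁, σ₁²) ≤ φ(x; θ₁, 2ε₀²)`. -/
theorem gauss_tail_bound
    (x θ₁ σ₁ ε₀ : ℝ) (hσ₁ : 0 < σ₁) (hε₀ : 0 < ε₀)
    (hx : σ₁ * |Real.log σ₁| ≤ |x - θ₁|) (hσε : σ₁ ≤ ε₀)
    (hsmall : ∀ s : ℝ, 0 < s → s ≤ ε₀ →
      Real.exp (-(1 / 4) * (Real.log s + 2) ^ 2 + 1) ≤ (2 * ε₀)⁻¹) :
    gaussSD x θ₁ σ₁ ≤ gaussSD x θ₁ (Real.sqrt 2 * ε₀) :=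
  gauss_tail_bound_general x θ₁ σ₁ ε₀ hσ₁ hx hσε hsmall
end
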